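/- arXiv:1709.06591 — 4 statements merged into one kernel-verified Lean document; each statement's English description precedes it below -/
import Mathlib

section
/- Assume external stability: Z ⊆ P − ℝᵏ₊ (every feasible objective vector is componentwise dominated by or equal to some Pareto-front point). If S_U is an upper shell, then there exist no x ∈ S_U, x'' ∈ X₀ and r ∈ ℝᵏ₊ with r ≠ 0 such that f(x'') = f(x) + r; equivalently, Z ∩ (f(S_U) + (ℝᵏ₊ ∖ {0})) = ∅. (This is the content of the paper's Lemma 2.) -/
/-- Dominance relation: `x ≺ x'` iff `f x ≪ f x'`, i.e. `f x ≤ f x'` componentwise and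
`f x ≠ f x'`. -/
def Dominates {n k : ℕ} (f : (Fin n → ℝ) → Fin k → ℝ) (x x' : Fin n → ℝ) : Prop :=
  (∀ l, f x l ≤ f x' l) ∧ f x ≠ f x'

/-- The set `N` of efficient elements of `X₀`. -/
def Efficient {n k : ℕ} (f : (Fin n → ℝ) → Fin k → ℝ) (X₀ : Set (Fin n → ℝ)) :
    Set (Fin n → ℝ) :=
  {x | x ∈ X₀ ∧ ¬ ∃ x' ∈ X₀, Dominates f x x'}

/-- An upper shell. -/
def UpperShell {n k : ℕ} (f : (Fin n → ℝ) → Fin k → ℝ) (X₀ : Set (Fin n → ℝ))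
    (ynad : Fin k → ℝ) (S : Set (Fin n → ℝ)) : Prop :=
  S.Finite ∧ S.Nonempty ∧ (∀ x ∈ S, x ∉ X₀) ∧
    (∀ x ∈ S, ¬ ∃ x' ∈ S, Dominates f x' x) ∧
    (∀ x ∈ S, ¬ ∃ x' ∈ Efficient f X₀, Dominates f x x') ∧
    (∀ x ∈ S, (∀ l, ynad l ≤ f x l) ∧ ynad ≠ f x)

theorem stmt1 {n k : ℕ} (hk : 2 ≤ k) (f : (Fin n → ℝ) → Fin k → ℝ)
    (X₀ : Set (Fin n → ℝ)) (hX₀ : IsCompact X₀)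
    (hN : (Efficient f X₀).Nonempty)
    (ynad : Fin k → ℝ)
    (hynad : ∀ l, IsLeast ((fun x => f x l) '' Efficient f X₀) (ynad l))
    -- external stability: Z ⊆ P − ℝᵏ₊
    (hZ : f '' X₀ ⊆ {y | ∃ p ∈ f '' Efficient f X₀, ∃ r : Fin k → ℝ,
            (∀ l, 0 ≤ r l) ∧ y = p - r})
    (S : Set (Fin n → ℝ)) (hS : UpperShell f X₀ ynad S) :
    (¬ ∃ x ∈ S, ∃ x'' ∈ X₀, ∃ r : Fin k → ℝ,
        (∀ l, 0 ≤ r l) ∧ r ≠ 0 ∧ f x'' = f x + r) ∧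
    (f '' X₀) ∩ {y | ∃ x ∈ S, ∃ r : Fin k → ℝ,
        (∀ l, 0 ≤ r l) ∧ r ≠ 0 ∧ y = f x + r} = ∅ := by
  have key : ¬ ∃ x ∈ S, ∃ x'' ∈ X₀, ∃ r : Fin k → ℝ,
      (∀ l, 0 ≤ r l) ∧ r ≠ 0 ∧ f x'' = f x + r := by
    rintro ⟨x, hxS, x'', hx'', r, hr, hr0, hfx⟩
    obtain ⟨p, ⟨x', hx', rfl⟩, r', hr', hpr⟩ := hZ ⟨x'', hx'', rfl⟩
    have hle : ∀ l, f x l ≤ f x' l := by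
      intro l
      have h1 : f x'' l = f x l + r l := by rw [hfx]; rfl
      have h2 : f x'' l = f x' l - r' l := by rw [hpr]; rfl
      have := hr l
      have := hr' l
      linarith
    by_cases heq : f x = f x'
    · -- then r = -r', both nonneg ⇒ r = 0
      apply hr0
      funext l
      have h1 : f x'' l = f x l + r l := by rw [hfx]; rfl
      have h2 : f x'' l = f x' l - r' l := by rw [hpr]; rfl
      have h3 : f x l = f x' l := by rw [heq]
      have := hr l; have := hr' l
      simp only [Pi.zero_apply]
      linarith
    · exact hS.2.2.2.2.1 x hxS ⟨x', hx', hle, heq⟩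
  refine ⟨key, ?_⟩
  ext y
  simp only [Set.mem_inter_iff, Set.mem_setOf_eq, Set.mem_empty_iff_false, iff_false]
  rintro ⟨⟨x'', hx'', rfl⟩, x, hxS, r, hr, hr0, hy⟩
  exact key ⟨x, hxS, x'', hx'', r, hr, hr0, hy⟩
end

section
/- (Lemma 3.) Let S ⊆ ℝⁿ be a finite nonempty set such that f(S) ⊆ P + int(ℝᵏ₊), where int(ℝᵏ₊) = {y ∈ ℝᵏ : y_l > 0 for all l}, and assume that (i) for every x ∈ S there is no x' ∈ S with x' ≺ x, and (ii) y^nad ≪ f(x) for every x ∈ S. Then S ⊆ ℝⁿ ∖ X₀ and S is an upper shell; in particular, for every x ∈ S there is no x' ∈ N with x ≺ x'. -/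
theorem stmt2 {n k : ℕ} (hk : 2 ≤ k) (f : (Fin n → ℝ) → Fin k → ℝ)
    (X₀ : Set (Fin n → ℝ)) (hX₀ : IsCompact X₀)
    (hN : (Efficient f X₀).Nonempty)
    (ynad : Fin k → ℝ)
    (hynad : ∀ l, IsLeast ((fun x => f x l) '' Efficient f X₀) (ynad l))
    (S : Set (Fin n → ℝ)) (hfin : S.Finite) (hne : S.Nonempty)
    -- f(S) ⊆ P + int(ℝᵏ₊)
    (hPint : ∀ x ∈ S, ∃ p ∈ f '' Efficient f X₀, ∃ d : Fin k → ℝ,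
        (∀ l, 0 < d l) ∧ f x = p + d)
    -- condition (i): no element of S dominates another element of S
    (hi : ∀ x ∈ S, ¬ ∃ x' ∈ S, Dominates f x' x)
    -- condition (iii): y^nad ≪ f x for all x ∈ S
    (hiii : ∀ x ∈ S, (∀ l, ynad l ≤ f x l) ∧ ynad ≠ f x) :
    (∀ x ∈ S, x ∉ X₀) ∧ UpperShell f X₀ ynad S ∧
      (∀ x ∈ S, ¬ ∃ x' ∈ Efficient f X₀, Dominates f x x') := by
  have key : ∀ x ∈ S, ∃ z ∈ Efficient f X₀, ∀ l, f z l < f x l := by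
    intro x hx
    obtain ⟨p, ⟨z, hz, rfl⟩, d, hd, hfx⟩ := hPint x hx
    exact ⟨z, hz, fun l => by have := hd l; rw [hfx]; simp; linarith⟩
  have hkpos : 0 < k := by omega
  have hnotX : ∀ x ∈ S, x ∉ X₀ := by
    intro x hx hxX
    obtain ⟨z, hz, hlt⟩ := key x hx
    exact hz.2 ⟨x, hxX, fun l => (hlt l).le, fun h => lt_irrefl _ (h ▸ hlt ⟨0, hkpos⟩)⟩
  have hnodom : ∀ x ∈ S, ¬ ∃ x' ∈ Efficient f X₀, Dominates f x x' := by
    rintro x hx ⟨x', hx', hle, _⟩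
    obtain ⟨z, hz, hlt⟩ := key x hx
    exact hz.2 ⟨x', hx'.1, fun l => (hlt l).le.trans (hle l),
      fun h => absurd (hle ⟨0, hkpos⟩) (by have := hlt ⟨0, hkpos⟩; rw [h] at this; linarith)⟩
  exact ⟨hnotX, ⟨hfin, hne, hnotX, hi, hnodom, hiii⟩, hnodom⟩
end

section
/- (Constructive consequence of Lemma 9.) Suppose all objective functions f_l, l = 1,…,k, are strongly monotonically increasing on ℝⁿ, and suppose the nadir point y^nad (with y^nad_l = min_{x∈N} f_l(x)) is attained. Let S ⊆ ℝⁿ be a finite nonempty set such that: (a) for every x ∈ S there exists an efficient element x' ∈ N with x' ≤ x componentwise and x' ≠ x; (b) for every x ∈ S there is no x'' ∈ S with x'' ≺ x. Then S is an upper shell; in particular S ⊆ ℝⁿ ∖ X₀, no element of S is dominated by an efficient element, and y^nad ≪ f(x) for every x ∈ S. -/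
/-- `φ` is strongly monotonically increasing on `ℝⁿ`. -/
def StrMonoIncr {n : ℕ} (φ : (Fin n → ℝ) → ℝ) : Prop :=
  ∀ x x' : Fin n → ℝ, x ≤ x' → x ≠ x' → φ x < φ x'

theorem stmt11 {n k : ℕ} (hk : 2 ≤ k) (f : (Fin n → ℝ) → Fin k → ℝ)
    (X₀ : Set (Fin n → ℝ))
    (hmono : ∀ l : Fin k, StrMonoIncr (fun x => f x l))
    (hN : (Efficient f X₀).Nonempty)
    (ynad : Fin k → ℝ)
    (hynad : ∀ l, IsLeast ((fun x => f x l) '' Efficient f X₀) (ynad l))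
    (S : Set (Fin n → ℝ)) (hfin : S.Finite) (hne : S.Nonempty)
    -- (a) every element of S strictly dominates (componentwise in the variable space)
    -- some efficient element
    (ha : ∀ x ∈ S, ∃ x' ∈ Efficient f X₀, x' ≤ x ∧ x' ≠ x)
    -- (b) no element of S is dominated by another element of S
    (hb : ∀ x ∈ S, ¬ ∃ x'' ∈ S, Dominates f x'' x) :
    UpperShell f X₀ ynad S ∧ (∀ x ∈ S, x ∉ X₀) ∧
      (∀ x ∈ S, ¬ ∃ x' ∈ Efficient f X₀, Dominates f x x') ∧
      (∀ x ∈ S, (∀ l, ynad l ≤ f x l) ∧ ynad ≠ f x) := by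

  -- For each x ∈ S, get an efficient point strictly below
  have key : ∀ x ∈ S, ∃ x' ∈ Efficient f X₀, ∀ l, f x' l < f x l := by
    intro x hx
    obtain ⟨x', hx', hle, hne'⟩ := ha x hx
    exact ⟨x', hx', fun l => hmono l x' x hle hne'⟩
  have hnotX : ∀ x ∈ S, x ∉ X₀ := by
    intro x hx hxX
    obtain ⟨x', hx', hlt⟩ := key x hx
    exact hx'.2 ⟨x, hxX, fun l => (hlt l).le,
      fun h => lt_irrefl _ (h ▸ hlt ⟨0, by omega⟩)⟩
  have hnotdom : ∀ x ∈ S, ¬ ∃ x' ∈ Efficient f X₀, Dominates f x x' := by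
    intro x hx ⟨x'', hx'', hle, _⟩
    obtain ⟨x', hx', hlt⟩ := key x hx
    exact hx'.2 ⟨x'', hx''.1, fun l => (hlt l).le.trans (hle l),
      fun h => lt_irrefl _ ((congrFun h ⟨0, by omega⟩) ▸ ((hlt ⟨0, by omega⟩).trans_le (hle ⟨0, by omega⟩)))⟩
  have hnad : ∀ x ∈ S, (∀ l, ynad l ≤ f x l) ∧ ynad ≠ f x := by
    intro x hx
    obtain ⟨x', hx', hlt⟩ := key x hx
    have h1 : ∀ l, ynad l < f x l := fun l =>
      lt_of_le_of_lt ((hynad l).2 ⟨x', hx', rfl⟩) (hlt l)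
    exact ⟨fun l => (h1 l).le, fun h => lt_irrefl _ (h ▸ h1 ⟨0, by omega⟩)⟩
  exact ⟨⟨hfin, hne, hnotX, hb, hnotdom, hnad⟩, hnotX, hnotdom, hnad⟩
end

section
/- (Example 1, nonexistence of upper shells.) For the biobjective maximization problem on ℝ² with f₁(x) = −(x₁−3)² − (x₂−4)², f₂(x) = −(x₁−4)² − (x₂−1)², and feasible set X₀ = {x ∈ ℝ² : 1 ≤ x₁ ≤ 5, 1 ≤ x₂ ≤ 5}, no upper shell exists. Concretely: every x ∈ ℝ² ∖ X₀ either fails y^nad ≪ f(x) (where y^nad = (−10,−10)) or is dominated by some efficient element x' ∈ N, so no finite nonempty subset of ℝ² ∖ X₀ can satisfy all the defining conditions of an upper shell. -/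
/-- The objective functions of Example 1:
`f₁(x) = −(x₁−3)² − (x₂−4)²`, `f₂(x) = −(x₁−4)² − (x₂−1)²`. -/
noncomputable def fEx (x : ℝ × ℝ) : ℝ × ℝ :=
  (-(x.1 - 3) ^ 2 - (x.2 - 4) ^ 2, -(x.1 - 4) ^ 2 - (x.2 - 1) ^ 2)

/-- Dominance relation for the biobjective maximization problem:
`x ≺ x'` iff `f₁(x) ≤ f₁(x')`, `f₂(x) ≤ f₂(x')` and `f(x) ≠ f(x')`. -/
def DomEx (x x' : ℝ × ℝ) : Prop :=
  (fEx x).1 ≤ (fEx x').1 ∧ (fEx x).2 ≤ (fEx x').2 ∧ fEx x ≠ fEx x'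

/-- The feasible set `X₀ = {x : 1 ≤ x₁ ≤ 5, 1 ≤ x₂ ≤ 5}`. -/
def X0Ex : Set (ℝ × ℝ) :=
  {x | 1 ≤ x.1 ∧ x.1 ≤ 5 ∧ 1 ≤ x.2 ∧ x.2 ≤ 5}

/-- The efficient set of the problem over `X₀`. -/
def EffEx : Set (ℝ × ℝ) :=
  {x | x ∈ X0Ex ∧ ¬ ∃ x' ∈ X0Ex, DomEx x x'}

/-- An upper shell for Example 1, with nadir point `y^nad = (−10, −10)`. -/
def UpperShellEx (S : Set (ℝ × ℝ)) : Prop :=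
  S.Finite ∧ S.Nonempty ∧ (∀ x ∈ S, x ∉ X0Ex) ∧
    (∀ x ∈ S, ¬ ∃ x' ∈ S, DomEx x' x) ∧
    (∀ x ∈ S, ¬ ∃ x' ∈ EffEx, DomEx x x') ∧
    (∀ x ∈ S, ((-10 : ℝ) ≤ (fEx x).1 ∧ (-10 : ℝ) ≤ (fEx x).2) ∧
      fEx x ≠ ((-10 : ℝ), (-10 : ℝ)))

lemma keyEx (t w z : ℝ) (ht0 : 0 ≤ t) (ht1 : t ≤ 1)
    (hA : w^2 + z^2 ≤ 10*t^2)
    (hB : (w-1)^2 + (z+3)^2 ≤ 10*(1-t)^2) :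
    w = t ∧ z = -3*t := by
  have h1 : (w - 3*z)^2 ≤ 10*(w^2+z^2) := by nlinarith [sq_nonneg (3*w+z)]
  have hle : w - 3*z ≤ 10*t := by nlinarith [sq_nonneg (w - 3*z - 10*t), sq_nonneg (w - 3*z + 10*t)]
  have h2 : (w^2+z^2) + 20*t - 10*t^2 ≤ 2*(w - 3*z) := by nlinarith
  have hge : 10*t ≤ w - 3*z := by nlinarith [sq_nonneg (w - 3*z - 10*t)]
  have hm : w - 3*z = 10*t := le_antisymm hle hge
  have hAeq : w^2 + z^2 = 10*t^2 := by nlinarith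
  have hz : 3*w + z = 0 := by nlinarith [sq_nonneg (3*w+z)]
  constructor <;> nlinarith

lemma exists_tEx (w z : ℝ) : ∃ t : ℝ, 0 ≤ t ∧ t ≤ 1 ∧
    10*t^2 ≤ w^2+z^2 ∧ 10*(1-t)^2 ≤ (w-1)^2+(z+3)^2 := by
  have h1 : (w-3*z)^2 ≤ 10*(w^2+z^2) := by nlinarith [sq_nonneg (3*w+z)]
  rcases le_total (w-3*z) 0 with hm|hm
  · exact ⟨0, le_refl _, zero_le_one, by nlinarith [sq_nonneg w, sq_nonneg z], by nlinarith⟩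
  rcases le_total (w-3*z) 10 with hm1|hm1
  · exact ⟨(w-3*z)/10, by linarith, by linarith, by nlinarith, by nlinarith⟩
  · exact ⟨1, zero_le_one, le_refl _, by nlinarith, by nlinarith [sq_nonneg (w-1), sq_nonneg (z+3)]⟩

lemma mainEx (x : ℝ × ℝ) (hx : x ∉ X0Ex)
    (h1 : (-10 : ℝ) ≤ (fEx x).1) (h2 : (-10 : ℝ) ≤ (fEx x).2) :
    ∃ x' ∈ EffEx, DomEx x x' := by
  obtain ⟨t, ht0, ht1, hA, hB⟩ := exists_tEx (x.1 - 3) (x.2 - 4)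
  refine ⟨(3 + t, 4 - 3*t), ⟨⟨by norm_num; linarith, by norm_num; linarith,
    by norm_num; linarith, by norm_num; linarith⟩, ?_⟩, ?_, ?_, ?_⟩
  · rintro ⟨q, hq, hd1, hd2, hne⟩
    have hfp1 : (fEx (3 + t, 4 - 3*t)).1 = -(10*t^2) := by simp [fEx]; ring
    have hfp2 : (fEx (3 + t, 4 - 3*t)).2 = -(10*(1-t)^2) := by simp [fEx]; ring
    have hqA : (q.1 - 3)^2 + (q.2 - 4)^2 ≤ 10*t^2 := by
      have := hd1; rw [hfp1] at this; simp [fEx] at this; nlinarith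
    have hqB : (q.1 - 3 - 1)^2 + (q.2 - 4 + 3)^2 ≤ 10*(1-t)^2 := by
      have := hd2; rw [hfp2] at this; simp [fEx] at this; nlinarith
    obtain ⟨hw, hz⟩ := keyEx t (q.1 - 3) (q.2 - 4) ht0 ht1 hqA hqB
    apply hne
    have hq1 : q.1 = 3 + t := by linarith
    have hq2 : q.2 = 4 - 3*t := by linarith
    rw [show q = (3 + t, 4 - 3*t) from Prod.ext hq1 hq2]
  · simp only [fEx]; nlinarith
  · simp only [fEx]; nlinarith
  · intro heq
    have e1 : (fEx x).1 = (fEx (3 + t, 4 - 3*t)).1 := by rw [heq]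
    have e2 : (fEx x).2 = (fEx (3 + t, 4 - 3*t)).2 := by rw [heq]
    simp only [fEx] at e1 e2
    have hxA : (x.1 - 3)^2 + (x.2 - 4)^2 ≤ 10*t^2 := by nlinarith
    have hxB : (x.1 - 3 - 1)^2 + (x.2 - 4 + 3)^2 ≤ 10*(1-t)^2 := by nlinarith
    obtain ⟨hw, hz⟩ := keyEx t (x.1 - 3) (x.2 - 4) ht0 ht1 hxA hxB
    exact hx ⟨by linarith, by linarith, by linarith, by linarith⟩

theorem stmt13 :
    (∀ x : ℝ × ℝ, x ∉ X0Ex →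
        ¬ (((-10 : ℝ) ≤ (fEx x).1 ∧ (-10 : ℝ) ≤ (fEx x).2) ∧
            fEx x ≠ ((-10 : ℝ), (-10 : ℝ))) ∨
        ∃ x' ∈ EffEx, DomEx x x') ∧
    ¬ ∃ S : Set (ℝ × ℝ), UpperShellEx S := by
  constructor
  · intro x hx
    by_cases h : ((-10 : ℝ) ≤ (fEx x).1 ∧ (-10 : ℝ) ≤ (fEx x).2) ∧
        fEx x ≠ ((-10 : ℝ), (-10 : ℝ))
    · exact Or.inr (mainEx x hx h.1.1 h.1.2)
    · exact Or.inl h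
  · rintro ⟨S, _, ⟨x, hxS⟩, hX0, _, hnodom, hnad⟩
    exact hnodom x hxS (mainEx x (hX0 x hxS) ((hnad x hxS).1).1 ((hnad x hxS).1).2)
end
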